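/- Suppose f : [0,1]^d → ℝ satisfies f(x) = g(x_j, h(x_{∖j})) for all x ∈ [0,1]^d, where h : [0,1]^{d-1} → ℝ is differentiable and g : [0,1] × ℝ → ℝ is differentiable in its second argument. Fix any interior point x_{∖j} and any finite collection of values x_j^1, ..., x_j^m ∈ [0,1]. Then the matrix A ∈ ℝ^{m × (d-1)} whose m-th row is the gradient vector ∇_{x_{∖j}} f(x_j^m, x_{∖j}) has rank at most 1; equivalently, there exists a unit vector z ∈ ℝ^{d-1} such that every row a of A satisfies a = (z z^T) a, so the gradient projection error E = Σ_m ‖a^m − (z z^T) a^m‖² equals zero. -/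

import Mathlib

/-!
Near the interior point `w`, the slice `w' ↦ f (insertCoord j t w')` coincides with `g t ∘ h`, so by
the chain rule its gradient at `w` is `∂₂g (t, h w) • ∇h w`. Hence `A` is the outer product of the
column `(∂₂g (tᵢ, h w))ᵢ` with the row `∇h w`, and the normalized `∇h w` (any unit vector if
`∇h w = 0`) is the required `z`.
-/

/-- Recombine the singled-out coordinate value `t` (in position `j`) with the vector `w` of the
remaining coordinates to form a full input vector in `ℝ^d`. -/
def insertCoord {d : ℕ} (j : Fin d) (t : ℝ) (w : {k : Fin d // k ≠ j} → ℝ) : Fin d → ℝ :=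
  fun k => if hk : k = j then t else w ⟨k, hk⟩

open Filter Topology Matrix

section insertCoord

variable {d : ℕ} {j : Fin d}

lemma insertCoord_self (t : ℝ) (w : {k : Fin d // k ≠ j} → ℝ) : insertCoord j t w j = t := by
  simp [insertCoord]

lemma insertCoord_restrict (t : ℝ) (w : {k : Fin d // k ≠ j} → ℝ) :
    (fun k : {k : Fin d // k ≠ j} => insertCoord j t w k.1) = w := by
  funext k
  simp [insertCoord, k.2]

lemma insertCoord_mem_Icc {t : ℝ} {w : {k : Fin d // k ≠ j} → ℝ} (ht : t ∈ Set.Icc 0 1)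
    (hw : w ∈ Set.Icc 0 1) : insertCoord j t w ∈ Set.Icc (0 : Fin d → ℝ) 1 := by
  have hcoord : ∀ k, insertCoord j t w k ∈ Set.Icc (0 : ℝ) 1 := fun k => by
    unfold insertCoord
    split_ifs with hk
    exacts [ht, ⟨hw.1 _, hw.2 _⟩]
  exact ⟨fun k => (hcoord k).1, fun k => (hcoord k).2⟩

end insertCoord

lemma fderiv_apply_eq_deriv_mul_of_eventuallyEq_comp {E : Type*} [NormedAddCommGroup E]
    [NormedSpace ℝ E] {φ h : E → ℝ} {g : ℝ → ℝ} {w : E} (hφ : φ =ᶠ[𝓝 w] g ∘ h)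
    (hg : DifferentiableAt ℝ g (h w)) (hh : DifferentiableAt ℝ h w) (e : E) :
    fderiv ℝ φ w e = deriv g (h w) * fderiv ℝ h w e := by
  rw [hφ.fderiv_eq, (hg.hasDerivAt.comp_hasFDerivAt w hh.hasFDerivAt).fderiv]
  rfl

lemma exists_sum_sq_eq_one_and_eq_mul_sum {ι : Type*} [Fintype ι] [Nonempty ι] (v : ι → ℝ) :
    ∃ z : ι → ℝ, ∑ k, z k ^ 2 = 1 ∧ ∀ k, v k = z k * ∑ k', z k' * v k' := by
  classical
  by_cases hv : v = 0
  · obtain ⟨k₀⟩ := ‹Nonempty ι›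
    refine ⟨Pi.single k₀ 1, ?_, fun k => by simp [hv]⟩
    rw [Finset.sum_eq_single k₀] <;> simp +contextual
  · set S := ∑ k, v k ^ 2
    have hS : 0 < S := by
      obtain ⟨k, hk⟩ := Function.ne_iff.mp hv
      exact Finset.sum_pos' (fun k _ => sq_nonneg _)
        ⟨k, Finset.mem_univ k, sq_pos_of_ne_zero hk⟩
    have hsqrt : Real.sqrt S ≠ 0 := by positivity
    refine ⟨fun k => v k / Real.sqrt S, ?_, fun k => ?_⟩
    · simp only [div_pow, Real.sq_sqrt hS.le, ← Finset.sum_div]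
      exact div_self hS.ne'
    · have hproj : ∑ k', v k' / Real.sqrt S * v k' = Real.sqrt S := by
        simp only [div_mul_eq_mul_div, ← sq, ← Finset.sum_div]
        exact Real.div_sqrt
      rw [hproj, div_mul_cancel₀ _ hsqrt]

lemma exists_sum_sq_eq_one_and_vecMulVec_eq_mul_sum {m n : Type*} [Fintype n] [Nonempty n]
    (c : m → ℝ) (v : n → ℝ) :
    ∃ z : n → ℝ, ∑ k, z k ^ 2 = 1 ∧
      ∀ i k, vecMulVec c v i k = z k * ∑ k', z k' * vecMulVec c v i k' := by
  obtain ⟨z, hz, hv⟩ := exists_sum_sq_eq_one_and_eq_mul_sum v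
  refine ⟨z, hz, fun i k => ?_⟩
  simp only [vecMulVec_apply, mul_left_comm _ (c i), ← Finset.mul_sum]
  rw [hv k]

/-- Suppose `f(x) = g(x_j, h(x_{∖j}))` on `[0,1]^d` with `h` differentiable and
`g` differentiable in its second argument. Fix an interior point `w = x_{∖j}` (all coordinates in
`(0,1)`) and values `x_j^1, …, x_j^m ∈ [0,1]`. Let `A` be the `m × (d-1)` matrix whose `i`-th row
is the gradient `∇_{x_{∖j}} f(x_j^i, w)`. Then `A` has rank at most `1`; equivalently there is a
unit vector `z` with every row `a` of `A` satisfying `a = (z zᵀ) a`, so the gradient projection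
error `E = Σ_i ‖aⁱ − (z zᵀ) aⁱ‖²` equals zero. -/
theorem iann_gradient_projection_error_zero (d : ℕ) (hd : 2 ≤ d) (j : Fin d)
    (f : (Fin d → ℝ) → ℝ) (g : ℝ → ℝ → ℝ) (h : ({k : Fin d // k ≠ j} → ℝ) → ℝ)
    (hh : DifferentiableOn ℝ h (Set.Icc (0 : {k : Fin d // k ≠ j} → ℝ) 1))
    (hg : ∀ u, Differentiable ℝ (g u))
    (hf : ∀ x ∈ Set.Icc (0 : Fin d → ℝ) 1, f x = g (x j) (h fun k => x k.1))
    (w : {k : Fin d // k ≠ j} → ℝ) (hw : ∀ k, w k ∈ Set.Ioo (0 : ℝ) 1)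
    (m : ℕ) (t : Fin m → ℝ) (ht : ∀ i, t i ∈ Set.Icc (0 : ℝ) 1)
    (A : Matrix (Fin m) {k : Fin d // k ≠ j} ℝ)
    (hA : ∀ i k, A i k =
      fderiv ℝ (fun w' => f (insertCoord j (t i) w')) w (Pi.single k 1)) :
    A.rank ≤ 1 ∧
      ∃ z : {k : Fin d // k ≠ j} → ℝ,
        (∑ k, z k ^ 2 = 1) ∧
        (∀ i k, A i k = z k * ∑ k', z k' * A i k') ∧
        (∑ i, ∑ k, (A i k - z k * ∑ k', z k' * A i k') ^ 2 = 0) := by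
  have : Nontrivial (Fin d) := Fin.nontrivial_iff_two_le.mpr hd
  obtain ⟨k₀, hk₀⟩ := exists_ne j
  have : Nonempty {k : Fin d // k ≠ j} := ⟨⟨k₀, hk₀⟩⟩
  have hIcc : Set.Icc 0 1 ∈ 𝓝 w := pi_Icc_mem_nhds (fun k => (hw k).1) (fun k => (hw k).2)
  have hslice : ∀ i, (fun w' => f (insertCoord j (t i) w')) =ᶠ[𝓝 w] g (t i) ∘ h := fun i => by
    filter_upwards [hIcc] with w' hw'
    rw [hf _ (insertCoord_mem_Icc (ht i) hw'), insertCoord_self, insertCoord_restrict]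
    rfl
  have hA_outer : A = vecMulVec (fun i => deriv (g (t i)) (h w))
      (fun k => fderiv ℝ h w (Pi.single k 1)) := by
    ext i k
    rw [hA, fderiv_apply_eq_deriv_mul_of_eventuallyEq_comp (hslice i) (hg _ _)
      (hh.differentiableAt hIcc)]
    rfl
  rw [hA_outer]
  obtain ⟨z, hz, hfix⟩ := exists_sum_sq_eq_one_and_vecMulVec_eq_mul_sum
    (fun i => deriv (g (t i)) (h w)) (fun k => fderiv ℝ h w (Pi.single k 1))
  exact ⟨rank_vecMulVec_le _ _, z, hz, hfix, by simp [← hfix]⟩
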